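/- Logical soundness of subtyping (monotonicity of type interpretation): for any types T₁, T₂ and any state (ρ,h,A), if T₁ ⊑ T₂ and ρ,h,A ⊨ T₁, then ρ,h,A ⊨ T₂. -/

import Mathlib

namespace SecureClones

abbrev Var := ℕ
abbrev Field := ℕ
abbrev Loc := ℕ
abbrev PolId := ℕ
abbrev Node := ℕ

/-- Values: locations or null. -/
inductive Val where
  | loc : Loc → Val
  | null : Val
deriving DecidableEq

abbrev Obj := Field → Val
abbrev Heap := Loc → Option Obj
abbrev Env := Var → Val

/-- An access path: a root variable followed by a sequence of fields. -/
structure Path where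
  root : Var
  fields : List Field
deriving DecidableEq

/-- Evaluation of a sequence of field dereferences from a value. -/
def evalFields (h : Heap) : Val → List Field → Option Val
  | v, [] => some v
  | Val.loc l, f :: fs =>
      match h l with
      | some o => evalFields h (o f) fs
      | none => none
  | Val.null, _ :: _ => none

/-- Concrete path evaluation ⟨ρ,h⟩π ⇓ v. -/
def EvalPath (ρ : Env) (h : Heap) (π : Path) (v : Val) : Prop :=
  evalFields h (ρ π.root) π.fields = some v

/-- Reachability in a heap: `Reach h v w` iff `w` is reachable from `v`
by a (possibly empty) sequence of field dereferences. -/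
inductive Reach (h : Heap) : Val → Val → Prop
  | refl (v) : Reach h v v
  | step {v : Val} {l : Loc} {o : Obj} (f : Field) :
      Reach h v (Val.loc l) → h l = some o → Reach h v (o f)

/-- A copy policy: a set of (policy identifier, deep field) pairs. -/
abbrev Pol := Set (PolId × Field)

/-- A field sequence follows only deep fields of a policy (w.r.t. policy map `Pm`). -/
inductive FieldsSat (Pm : PolId → Pol) : Pol → List Field → Prop
  | nil (τ) : FieldsSat Pm τ []
  | cons {τ : Pol} {fs : List Field} (X : PolId) (f : Field) :
      (X, f) ∈ τ → FieldsSat Pm (Pm X) fs → FieldsSat Pm τ (f :: fs)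

/-- ⊢ π : τ : the access path follows only deep fields of τ. -/
def PathSat (Pm : PolId → Pol) (π : Path) (τ : Pol) : Prop :=
  FieldsSat Pm τ π.fields

/-- Policy semantics ρ,h,x ⊨ τ. -/
def PolSem (Pm : PolId → Pol) (ρ : Env) (h : Heap) (x : Var) (τ : Pol) : Prop :=
  ∀ (π π' : Path) (l l' : Loc),
    π.root = x → π'.root ≠ x →
    PathSat Pm π τ →
    EvalPath ρ h π (Val.loc l) → EvalPath ρ h π' (Val.loc l') →
    l ≠ l'

/-- Base types of the type-and-effect system. -/
inductive BaseType where
  | node : Node → BaseType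
  | bot
  | topOut
  | top
deriving DecidableEq

abbrev Graph := Node → Option (Field → BaseType)

/-- A type (Γ,Δ,Θ). -/
structure Ty where
  Γ : Var → BaseType
  Δ : Graph
  Θ : Set Node

/-- Abstract evaluation of a field sequence from a base type, with ⊤, ⊤out as sinks. -/
def aevalFields (Δ : Graph) : BaseType → List Field → Option BaseType
  | t, [] => some t
  | BaseType.node n, f :: fs =>
      match Δ n with
      | some e => aevalFields Δ (e f) fs
      | none => none
  | BaseType.top, _ :: _ => some BaseType.top
  | BaseType.topOut, _ :: _ => some BaseType.topOut
  | BaseType.bot, _ :: _ => none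

/-- Abstract path evaluation [Γ,Δ]π ⇓ t. -/
def AEval (Γ : Var → BaseType) (Δ : Graph) (π : Path) (t : BaseType) : Prop :=
  aevalFields Δ (Γ π.root) π.fields = some t

/-- Auxiliary type interpretation [[v : t]]. -/
inductive AuxInterp (ρ : Env) (h : Heap) (A : Set Loc) (Γ : Var → BaseType) (Δ : Graph) :
    Val → BaseType → Prop
  | null (t) : AuxInterp ρ h A Γ Δ Val.null t
  | top (v) : AuxInterp ρ h A Γ Δ v BaseType.top
  | topOut (l : Loc) :
      (∀ l' : Loc, Reach h (Val.loc l) (Val.loc l') → l' ∉ A) →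
      AuxInterp ρ h A Γ Δ (Val.loc l) BaseType.topOut
  | node (l : Loc) (n : Node) :
      l ∈ A → (Δ n).isSome →
      (∀ π, EvalPath ρ h π (Val.loc l) → AEval Γ Δ π (BaseType.node n)) →
      AuxInterp ρ h A Γ Δ (Val.loc l) (BaseType.node n)

/-- Main type interpretation ρ,h,A ⊨ (Γ,Δ,Θ). -/
structure Interp (ρ : Env) (h : Heap) (A : Set Loc) (T : Ty) : Prop where
  paths : ∀ (π : Path) (t : BaseType) (v : Val),
    AEval T.Γ T.Δ π t → EvalPath ρ h π v → AuxInterp ρ h A T.Γ T.Δ v t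
  strong : ∀ n ∈ T.Θ, ∀ (π π' : Path) (l l' : Loc),
    AEval T.Γ T.Δ π (BaseType.node n) → AEval T.Γ T.Δ π' (BaseType.node n) →
    EvalPath ρ h π (Val.loc l) → EvalPath ρ h π' (Val.loc l') → l = l'

/-- Value sub-typing t ≤_σ t' (σ : Node → Option Node, none standing for ⊤). -/
inductive VSub (σ : Node → Option Node) : BaseType → BaseType → Prop
  | bot (t) : VSub σ BaseType.bot t
  | top {t : BaseType} : (∀ n, t ≠ BaseType.node n) → VSub σ t BaseType.top
  | topOut : VSub σ BaseType.topOut BaseType.topOut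
  | node {n n' : Node} : σ n = some n' → VSub σ (BaseType.node n) (BaseType.node n')
  | nodeTop {n : Node} : σ n = none → VSub σ (BaseType.node n) BaseType.top

/-- T₁ ⊑ T₂ via the fusion map σ. -/
structure SubtypeVia (T₁ T₂ : Ty) (σ : Node → Option Node) : Prop where
  st1 : ∀ n n', (T₁.Δ n).isSome → σ n = some n' → (T₂.Δ n').isSome
  st2 : ∀ (t₁ : BaseType) (π : Path), AEval T₁.Γ T₁.Δ π t₁ →
      ∃ t₂, VSub σ t₁ t₂ ∧ AEval T₂.Γ T₂.Δ π t₂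
  st3 : ∀ n₂ ∈ T₂.Θ, ∃ n₁ ∈ T₁.Θ,
      ∀ n, ((T₁.Δ n).isSome ∧ σ n = some n₂) ↔ n = n₁

/-- The sub-typing relation T₁ ⊑ T₂. -/
def TySub (T₁ T₂ : Ty) : Prop := ∃ σ, SubtypeVia T₁ T₂ σ

-- Successor base type of a policy node for field f: the node of the policy
-- governing f if f is deep, and ⊤ otherwise.
open Classical in
noncomputable def polEdge (τ : Pol) (f : Field) : BaseType :=
  if h : ∃ X, (X, f) ∈ τ then BaseType.node (h.choose + 1) else BaseType.top

/-- The graph part of Φ(τ): node 0 is the unfolded root n_τ, node X+1 is the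
node n'_X of policy identifier X. -/
noncomputable def PhiGraph (Pm : PolId → Pol) (τ : Pol) : Graph :=
  fun n =>
    match n with
    | 0 => some (polEdge τ)
    | m + 1 => some (polEdge (Pm m))

/-- The root node n_τ of Φ(τ). -/
def PhiRoot : Node := 0

/-- Heap update h[(l,f) ↦ v]. -/
def hupd (h : Heap) (l : Loc) (f : Field) (v : Val) : Heap :=
  fun l' => if l' = l then (h l).map (fun o => Function.update o f v) else h l'

/-- Graph update Δ[(n,f) ↦ t]. -/
def gupd (Δ : Graph) (n : Node) (f : Field) (t : BaseType) : Graph :=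
  fun m => if m = n then (Δ n).map (fun e => Function.update e f t) else Δ m


/-!
Every path that evaluates concretely also evaluates abstractly in `T₁`: along the path, the
auxiliary interpretation of the value reached so far never lets the concrete step succeed while
the abstract one fails. Condition ST₂ then carries the abstract type of each path to `T₂` through
value subtyping, which preserves the auxiliary interpretation (ST₁ keeps node types defined).
For a strong node `n₂` of `T₂`, every location-valued path of type `n₂` has in `T₁` a defined
node type mapped by `σ` to `n₂`; by ST₃ that node is the single strong node `n₁`, whose
uniqueness in `T₁` gives uniqueness in `T₂`.
-/

theorem evalFields_append (h : Heap) (v : Val) (fs gs : List Field) :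
    evalFields h v (fs ++ gs) = (evalFields h v fs).bind (evalFields h · gs) := by
  induction fs generalizing v with
  | nil => rfl
  | cons f fs ih =>
    cases v with
    | null => rfl
    | loc l =>
      simp only [List.cons_append, evalFields]
      cases h l with
      | none => rfl
      | some o => exact ih (o f)

theorem aevalFields_append (Δ : Graph) (t : BaseType) (fs gs : List Field) :
    aevalFields Δ t (fs ++ gs) = (aevalFields Δ t fs).bind (aevalFields Δ · gs) := by
  induction fs generalizing t with
  | nil => rfl
  | cons f fs ih =>
    cases t with
    | node n =>
      simp only [List.cons_append, aevalFields]
      cases Δ n with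
      | none => rfl
      | some e => exact ih (e f)
    | bot => rfl
    | top | topOut => cases gs <;> rfl

theorem AEval.unique {Γ : Var → BaseType} {Δ : Graph} {π : Path} {t t' : BaseType}
    (ht : AEval Γ Δ π t) (ht' : AEval Γ Δ π t') : t = t' :=
  Option.some_injective _ (ht.symm.trans ht')

section AuxInterp

variable {ρ : Env} {h : Heap} {A : Set Loc} {Γ : Var → BaseType} {Δ : Graph}

theorem AuxInterp.eq_null_of_bot {v : Val} (ha : AuxInterp ρ h A Γ Δ v .bot) : v = .null := by
  cases ha; rfl

theorem AuxInterp.isSome_of_node {l : Loc} {n : Node}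
    (ha : AuxInterp ρ h A Γ Δ (.loc l) (.node n)) : (Δ n).isSome := by
  cases ha with
  | node _ _ _ hn _ => exact hn

theorem AuxInterp.exists_aevalFields_singleton {v w : Val} {t : BaseType} {f : Field}
    (ha : AuxInterp ρ h A Γ Δ v t) (hw : evalFields h v [f] = some w) :
    ∃ t', aevalFields Δ t [f] = some t' := by
  cases ha with
  | null => simp [evalFields] at hw
  | top | topOut => exact ⟨_, rfl⟩
  | node l n _ hn _ =>
    obtain ⟨e, he⟩ := Option.isSome_iff_exists.mp hn
    exact ⟨e f, by simp [aevalFields, he]⟩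

end AuxInterp

theorem Interp.exists_aeval {ρ : Env} {h : Heap} {A : Set Loc} {T : Ty}
    (hint : Interp ρ h A T) {π : Path} {v : Val} (hv : EvalPath ρ h π v) :
    ∃ t, AEval T.Γ T.Δ π t := by
  obtain ⟨x, fs⟩ := π
  induction fs using List.reverseRecOn generalizing v with
  | nil => exact ⟨T.Γ x, rfl⟩
  | append_singleton fs f ih =>
    obtain ⟨w, hw, hwv⟩ := Option.bind_eq_some_iff.mp ((evalFields_append ..).symm.trans hv)
    obtain ⟨t, ht⟩ := ih hw
    obtain ⟨t', ht'⟩ := (hint.paths _ t w ht hw).exists_aevalFields_singleton hwv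
    refine ⟨t', ?_⟩
    rw [AEval, aevalFields_append, show aevalFields T.Δ (T.Γ x) fs = some t from ht]
    exact ht'

namespace SubtypeVia

variable {T₁ T₂ : Ty} {σ : Node → Option Node}

theorem aeval_node (hσ : SubtypeVia T₁ T₂ σ) {π : Path} {n n' : Node} (hn : σ n = some n')
    (h₁ : AEval T₁.Γ T₁.Δ π (.node n)) : AEval T₂.Γ T₂.Δ π (.node n') := by
  obtain ⟨t₂, hvs, h₂⟩ := hσ.st2 _ π h₁
  cases hvs with
  | top hne => exact absurd rfl (hne n)
  | nodeTop hnone => simp [hn] at hnone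
  | node hsome =>
    obtain rfl := Option.some_injective _ (hn.symm.trans hsome)
    exact h₂

theorem auxInterp {ρ : Env} {h : Heap} {A : Set Loc} (hσ : SubtypeVia T₁ T₂ σ) {v : Val}
    {t₁ t₂ : BaseType} (hvs : VSub σ t₁ t₂) (ha : AuxInterp ρ h A T₁.Γ T₁.Δ v t₁) :
    AuxInterp ρ h A T₂.Γ T₂.Δ v t₂ := by
  cases hvs with
  | bot => exact ha.eq_null_of_bot ▸ .null _
  | top | nodeTop => exact .top v
  | topOut =>
    cases ha with
    | null => exact .null _
    | topOut l hA => exact .topOut l hA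
  | @node n n' hn =>
    cases ha with
    | null => exact .null _
    | node l _ hA hdef hpaths =>
      exact .node l n' hA (hσ.st1 n n' hdef hn) fun π hπ => hσ.aeval_node hn (hpaths π hπ)

theorem exists_node_of_aeval_node {ρ : Env} {h : Heap} {A : Set Loc}
    (hσ : SubtypeVia T₁ T₂ σ) (hint : Interp ρ h A T₁) {π : Path} {n₂ : Node} {l : Loc}
    (h₂ : AEval T₂.Γ T₂.Δ π (.node n₂)) (hv : EvalPath ρ h π (.loc l)) :
    ∃ n, (T₁.Δ n).isSome ∧ σ n = some n₂ ∧ AEval T₁.Γ T₁.Δ π (.node n) := by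
  obtain ⟨t₁, h₁⟩ := hint.exists_aeval hv
  obtain ⟨t₂, hvs, h₂'⟩ := hσ.st2 t₁ π h₁
  obtain rfl := h₂'.unique h₂
  have ha := hint.paths π t₁ _ h₁ hv
  cases hvs with
  | bot => cases ha.eq_null_of_bot
  | @node n _ hn => exact ⟨n, ha.isSome_of_node, hn, h₁⟩

end SubtypeVia

/-- Logical soundness of subtyping: type interpretation is monotone along ⊑. -/
theorem interpretation_monotone (T₁ T₂ : Ty) (ρ : Env) (h : Heap) (A : Set Loc)
    (hsub : TySub T₁ T₂) (hint : Interp ρ h A T₁) :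
    Interp ρ h A T₂ := by
  obtain ⟨σ, hσ⟩ := hsub
  refine ⟨fun π t₂ v h₂ hv => ?_, fun n₂ hn₂ π π' l l' h₂ h₂' hv hv' => ?_⟩
  · obtain ⟨t₁, h₁⟩ := hint.exists_aeval hv
    obtain ⟨t₂', hvs, h₂''⟩ := hσ.st2 t₁ π h₁
    obtain rfl := h₂''.unique h₂
    exact hσ.auxInterp hvs (hint.paths π t₁ v h₁ hv)
  · obtain ⟨n₁, hn₁, hfiber⟩ := hσ.st3 n₂ hn₂
    obtain ⟨n, hn, hσn, h₁⟩ := hσ.exists_node_of_aeval_node hint h₂ hv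
    obtain ⟨n', hn', hσn', h₁'⟩ := hσ.exists_node_of_aeval_node hint h₂' hv'
    obtain rfl := (hfiber n).1 ⟨hn, hσn⟩
    obtain rfl := (hfiber n').1 ⟨hn', hσn'⟩
    exact hint.strong _ hn₁ π π' l l' h₁ h₁' hv hv'

end SecureClones
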